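/- Given a constraint network and a total ordering x_1 < … < x_n of its variables, if the network is dually adaptively consistent with respect to this ordering, then a backtrack-free search is ensured: for every k < n, every consistent instantiation of {x_1, …, x_k} can be extended by a value for x_{k+1} from its domain to a consistent instantiation of {x_1, …, x_{k+1}}. -/

import Mathlib

/-- A constraint: a nonempty scope of variables and a set of allowed tuples
(total assignments whose restriction to the scope determines membership). -/
structure Constraint (V : Type) (α : Type) where
  scope : Finset V
  scope_nonempty : scope.Nonempty
  allowed : Set (V → α)
  allowed_ext : ∀ f g : V → α, (∀ v ∈ scope, f v = g v) → f ∈ allowed → g ∈ allowed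

/-- A constraint network: a finite nonempty domain for each variable and a finite
set of constraints, no two of which have the same scope. -/
structure Network (V : Type) (α : Type) [Fintype V] [DecidableEq V] where
  dom : V → Finset α
  dom_nonempty : ∀ v, (dom v).Nonempty
  cons : Set (Constraint V α)
  cons_finite : cons.Finite
  scope_inj : ∀ c ∈ cons, ∀ c' ∈ cons, c.scope = c'.scope → c = c'

namespace Network

variable {V α : Type} [Fintype V] [DecidableEq V]

/-- `f` is an instantiation of the variables `Y`: each variable of `Y` gets a value
from its domain. -/
def Inst (R : Network V α) (Y : Set V) (f : V → α) : Prop :=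
  ∀ v ∈ Y, f v ∈ R.dom v

/-- `f` is a consistent instantiation of the variables `Y`: it is an instantiation of
`Y` satisfying every constraint whose scope is contained in `Y`. -/
def ConsistentOn (R : Network V α) (Y : Set V) (f : V → α) : Prop :=
  R.Inst Y f ∧ ∀ c ∈ R.cons, (c.scope : Set V) ⊆ Y → f ∈ c.allowed

/-- `R` is `k`-consistent: every consistent instantiation of any `k - 1` distinct
variables extends consistently to any further variable. -/
def KConsistent (R : Network V α) (k : ℕ) : Prop :=
  ∀ (Y : Finset V) (f : V → α), Y.card + 1 = k → R.ConsistentOn ↑Y f →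
    ∀ x ∉ Y, ∃ u ∈ R.dom x,
      R.ConsistentOn ↑(insert x Y) (Function.update f x u)

/-- `R` is strongly `k`-consistent: `j`-consistent for every `j ≤ k`. -/
def StronglyKConsistent (R : Network V α) (k : ℕ) : Prop :=
  ∀ j ≤ k, R.KConsistent j

/-- `R` is globally consistent: strongly `n`-consistent, `n` the number of variables. -/
def GloballyConsistent (R : Network V α) : Prop :=
  R.StronglyKConsistent (Fintype.card V)

/-- The extension set of an instantiation `f` (of `c.scope − {x}`) to `x` with
respect to the constraint `c`: the values `b` of the domain of `x` such that the
extended instantiation satisfies `c`. -/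
def extSet (R : Network V α) (c : Constraint V α) (x : V) (f : V → α) : Set α :=
  {b | b ∈ R.dom x ∧ Function.update f x b ∈ c.allowed}

/-- `c` is a relevant constraint on `x` with respect to `Y`: its scope contains `x`
and its other variables all belong to `Y`. -/
def Relevant (R : Network V α) (c : Constraint V α) (x : V) (Y : Set V) : Prop :=
  c ∈ R.cons ∧ x ∈ c.scope ∧ (↑(c.scope.erase x) : Set V) ⊆ Y

/-- `c` is properly `m`-tight with respect to `x`: every extension set to `x` has at
most `m` elements. -/
def ProperlyTightWrt (R : Network V α) (c : Constraint V α) (x : V) (m : ℕ) : Prop :=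
  ∀ f : V → α, R.Inst ↑(c.scope.erase x) f → (R.extSet c x f).ncard ≤ m

/-- `c` is properly `m`-tight: properly `m`-tight with respect to each of its
variables. -/
def ProperlyTight (R : Network V α) (c : Constraint V α) (m : ℕ) : Prop :=
  ∀ x ∈ c.scope, R.ProperlyTightWrt c x m

/-- `R` (with `n` variables) is weakly `m`-tight at level `k`: for every set `Y` of
`l` variables, `k ≤ l < n`, and every variable `x ∉ Y`, some relevant constraint on
`x` with respect to `Y` is properly `m`-tight. -/
def WeaklyTight (R : Network V α) (m k : ℕ) : Prop :=
  ∀ Y : Finset V, k ≤ Y.card → Y.card < Fintype.card V →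
    ∀ x ∉ Y, ∃ c, R.Relevant c x ↑Y ∧ R.ProperlyTight c m

/-- `R` is tree convex: there is a tree on the union of all the domains under which
every nonempty extension set of every constraint is tree convex (induces a connected
subgraph). -/
def TreeConvexNet (R : Network V α) : Prop :=
  ∃ T : SimpleGraph {a : α // a ∈ ⋃ v, (R.dom v : Set α)},
    T.IsTree ∧
      ∀ c ∈ R.cons, ∀ x ∈ c.scope, ∀ f : V → α,
        R.Inst ↑(c.scope.erase x) f → (R.extSet c x f).Nonempty →
          (T.induce (Subtype.val ⁻¹' R.extSet c x f)).Connected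

/-- `R` is relationally `m`-consistent: for any `m` distinct constraints, any common
variable `x` of their scopes, and any consistent instantiation of the union of their
scopes minus `x`, some value of the domain of `x` extends it to satisfy all `m`
constraints. -/
def RelConsistent (R : Network V α) (m : ℕ) : Prop :=
  ∀ cs : Fin m → Constraint V α, Function.Injective cs →
    (∀ i, cs i ∈ R.cons) → ∀ x : V, (∀ i, x ∈ (cs i).scope) →
      ∀ f : V → α, R.ConsistentOn ((⋃ i, ((cs i).scope : Set V)) \ {x}) f →
        ∃ u ∈ R.dom x, ∀ i, Function.update f x u ∈ (cs i).allowed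

/-- `R` is strongly relationally `m`-consistent. -/
def StronglyRelConsistent (R : Network V α) (m : ℕ) : Prop :=
  ∀ j ≤ m, R.RelConsistent j

end Network

/-- With the variables totally ordered as `Fin n`, the directionally relevant
constraints on a variable `x`: those whose scope contains `x` and otherwise only
variables preceding `x`. -/
def Network.DR {n : ℕ} {α : Type} (R : Network (Fin n) α) (x : Fin n) :
    Set (Constraint (Fin n) α) :=
  {c | c ∈ R.cons ∧ x ∈ c.scope ∧ ∀ v ∈ c.scope, v ≤ x}

/-- A set `Cs` of constraints (from `DR x`), with `S` the set of all variables
occurring in them, is consistent on `x` if every consistent instantiation of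
`S − {x}` extends by a value of the domain of `x` to satisfy all constraints
of `Cs`. -/
def Network.ConsistentOnVar {n : ℕ} {α : Type} (R : Network (Fin n) α)
    (Cs : Set (Constraint (Fin n) α)) (x : Fin n) : Prop :=
  ∀ f : Fin n → α,
    R.ConsistentOn ((⋃ c ∈ Cs, (c.scope : Set (Fin n))) \ {x}) f →
      ∃ u ∈ R.dom x, ∀ c ∈ Cs, Function.update f x u ∈ c.allowed

/-- Backtrack-free search: for every `k < n`, every consistent instantiation of the
first `k` variables extends by a value for the `(k+1)`-st variable from its domain
to a consistent instantiation of the first `k + 1` variables. -/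
def Network.BacktrackFree {n : ℕ} {α : Type} (R : Network (Fin n) α) : Prop :=
  ∀ (k : ℕ) (hk : k < n), ∀ f : Fin n → α,
    R.ConsistentOn {i : Fin n | (i : ℕ) < k} f →
      ∃ u ∈ R.dom ⟨k, hk⟩,
        R.ConsistentOn {i : Fin n | (i : ℕ) < k + 1} (Function.update f ⟨k, hk⟩ u)

/-!
Fix a consistent instantiation `f` of the variables before `x`; it suffices to find a value
of `x` satisfying every directionally relevant constraint on `x`. If the width of `x` is at
most `mx x` this is condition (1). Otherwise, suppose no value works: then each of the at most
`mx x` values allowed by the tightest constraint `cx x` violates some other constraint of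
`DR x`. These violated constraints, padded to exactly `mx x` of them, form together with
`cx x` a set that is consistent on `x` by condition (2), and the value it provides is allowed
by `cx x` yet violates one of them.
-/

theorem Set.exists_forall_of_forall_insert_of_ncard_eq {β γ : Type*} {S : Finset β}
    {D : Set γ} {c₀ : γ} {m : ℕ} (P : β → γ → Prop) (hc₀ : c₀ ∈ D)
    (htight : {u ∈ (S : Set β) | P u c₀}.ncard ≤ m) (hm : m < D.ncard)
    (h : ∀ Cs ⊆ D \ {c₀}, Cs.ncard = m → ∃ u ∈ S, ∀ c ∈ insert c₀ Cs, P u c) :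
    ∃ u ∈ S, ∀ c ∈ D, P u c := by
  by_contra! hnone
  set E := {u ∈ (S : Set β) | P u c₀}
  have hviolated : ∀ u : E, ∃ c ∈ D \ {c₀}, ¬P u c := by
    rintro ⟨u, huS, hu₀⟩
    obtain ⟨c, hcD, hc⟩ := hnone u huS
    exact ⟨c, ⟨hcD, by rintro rfl; exact hc hu₀⟩, hc⟩
  choose w hwD hwP using hviolated
  have hrange : (Set.range w).ncard ≤ m := by
    have : Finite E := (S.finite_toSet.subset fun _ hu => hu.1).to_subtype
    rw [← Set.image_univ]
    exact (Set.ncard_image_le Set.finite_univ).trans ((Set.ncard_univ E).trans_le htight)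
  have hpad : m ≤ (D \ {c₀}).ncard := by
    rw [Set.ncard_sdiff_singleton_of_mem hc₀]
    omega
  obtain ⟨Cs, hwCs, hCsD, hCs⟩ :=
    Set.exists_subsuperset_card_eq (Set.range_subset_iff.2 hwD) hrange hpad
  obtain ⟨u, huS, hu⟩ := h Cs hCsD hCs
  have huE : u ∈ E := ⟨huS, hu c₀ (Set.mem_insert _ _)⟩
  exact hwP ⟨u, huE⟩ (hu _ (Set.mem_insert_of_mem _ (hwCs ⟨⟨u, huE⟩, rfl⟩)))

namespace Network

section

variable {V α : Type} [Fintype V] [DecidableEq V] {R : Network V α}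

theorem ConsistentOn.mono {Y Y' : Set V} {f : V → α} (hf : R.ConsistentOn Y' f)
    (hY : Y ⊆ Y') : R.ConsistentOn Y f :=
  ⟨fun v hv => hf.1 v (hY hv), fun c hc hs => hf.2 c hc (hs.trans hY)⟩

theorem ConsistentOn.update_insert {Y : Set V} {f : V → α} {x : V} {u : α}
    (hf : R.ConsistentOn Y f) (hu : u ∈ R.dom x)
    (hx : ∀ c ∈ R.cons, x ∈ c.scope → ↑c.scope ⊆ insert x Y →
      Function.update f x u ∈ c.allowed) :
    R.ConsistentOn (insert x Y) (Function.update f x u) := by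
  constructor
  · intro v hv
    by_cases hvx : v = x
    · subst hvx
      simpa using hu
    · rw [Function.update_of_ne hvx]
      exact hf.1 v (hv.resolve_left hvx)
  · intro c hc hs
    by_cases hxc : x ∈ c.scope
    · exact hx c hc hxc hs
    · have hagree : ∀ v ∈ c.scope, f v = Function.update f x u v := fun v hv =>
        (Function.update_of_ne (ne_of_mem_of_not_mem hv hxc) _ _).symm
      refine c.allowed_ext f _ hagree (hf.2 c hc fun v hv => ?_)
      exact (hs hv).resolve_left (ne_of_mem_of_not_mem hv hxc)

end

variable {n : ℕ} {α : Type} {R : Network (Fin n) α} {x : Fin n}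

theorem coe_scope_diff_subset_Iio {c : Constraint (Fin n) α} (hc : c ∈ R.DR x) :
    ↑c.scope \ {x} ⊆ Set.Iio x :=
  fun v hv => lt_of_le_of_ne (hc.2.2 v hv.1) hv.2

theorem ConsistentOn.biUnion_scope_diff {f : Fin n → α} {Cs : Set (Constraint (Fin n) α)}
    (hf : R.ConsistentOn (Set.Iio x) f) (hCs : Cs ⊆ R.DR x) :
    R.ConsistentOn ((⋃ c ∈ Cs, (c.scope : Set (Fin n))) \ {x}) f := by
  refine hf.mono ?_
  rintro v ⟨hv, hvx⟩
  obtain ⟨c, hc, hvc⟩ := Set.mem_iUnion₂.1 hv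
  exact coe_scope_diff_subset_Iio (hCs hc) ⟨hvc, hvx⟩

theorem ConsistentOn.update_Iic {f : Fin n → α} {u : α} (hf : R.ConsistentOn (Set.Iio x) f)
    (hu : u ∈ R.dom x) (hDR : ∀ c ∈ R.DR x, Function.update f x u ∈ c.allowed) :
    R.ConsistentOn (Set.Iic x) (Function.update f x u) := by
  rw [← Set.Iio_insert]
  exact hf.update_insert hu fun c hc hxc hs => hDR c ⟨hc, hxc, fun v hv =>
    (hs hv).elim le_of_eq fun hlt => hlt.le⟩

theorem backtrackFree_of_forall_exists_DR
    (h : ∀ x f, R.ConsistentOn (Set.Iio x) f →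
      ∃ u ∈ R.dom x, ∀ c ∈ R.DR x, Function.update f x u ∈ c.allowed) :
    R.BacktrackFree := by
  intro k hk f hf
  obtain ⟨u, hu, hDR⟩ := h ⟨k, hk⟩ f hf
  have hIic : {i : Fin n | (i : ℕ) < k + 1} = Set.Iic ⟨k, hk⟩ :=
    Set.ext fun _ => Nat.lt_succ_iff
  exact ⟨u, hu, hIic ▸ hf.update_Iic hu hDR⟩

end Network

theorem Network.duallyAdaptivelyConsistent_backtrackFree_general {n : ℕ} {α : Type}
    (R : Network (Fin n) α)
    (cx : Fin n → Constraint (Fin n) α) (mx : Fin n → ℕ)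
    (hcx : ∀ x, (R.DR x).Nonempty → cx x ∈ R.DR x)
    (hcx_tight : ∀ x, (R.DR x).Nonempty → R.ProperlyTightWrt (cx x) x (mx x))
    (h1 : ∀ x : Fin n, (R.DR x).ncard ≤ mx x → R.ConsistentOnVar (R.DR x) x)
    (h2 : ∀ x : Fin n, mx x < (R.DR x).ncard →
      ∀ Cs ⊆ R.DR x \ {cx x}, Cs.ncard = mx x →
        R.ConsistentOnVar (insert (cx x) Cs) x) :
    R.BacktrackFree := by
  refine Network.backtrackFree_of_forall_exists_DR fun x f hf => ?_
  rcases (R.DR x).eq_empty_or_nonempty with hempty | hne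
  · obtain ⟨u, hu⟩ := R.dom_nonempty x
    exact ⟨u, hu, by simp [hempty]⟩
  rcases le_or_gt (R.DR x).ncard (mx x) with hle | hlt
  · exact h1 x hle f (hf.biUnion_scope_diff subset_rfl)
  have hcxDR := hcx x hne
  have htight : (R.extSet (cx x) x f).ncard ≤ mx x := hcx_tight x hne f fun v hv =>
    hf.1 v (Network.coe_scope_diff_subset_Iio hcxDR (by simpa using hv))
  refine Set.exists_forall_of_forall_insert_of_ncard_eq
    (fun u c => Function.update f x u ∈ c.allowed) hcxDR htight hlt fun Cs hCs hcard =>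
      h2 x hlt Cs hCs hcard f (hf.biUnion_scope_diff ?_)
  exact Set.insert_subset hcxDR (hCs.trans Set.sdiff_subset)

/-- A dually adaptively consistent constraint network admits backtrack-free search.
Here, for each variable `x` (with `DR x` nonempty), `cx x` is a tightest
directionally relevant constraint on `x`: it belongs to `DR x`, is properly
`(mx x)`-tight with respect to `x`, and `mx x` is minimal over the constraints of
`DR x`.  Dually adaptive consistency: (1) for every `x` whose width `|DR x|` is at
most `mx x`, the whole of `DR x` is consistent on `x`; (2) for every `x` whose width
exceeds `mx x` and every `mx x` constraints of `DR x` other than `cx x`, these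
together with `cx x` are consistent on `x`. -/
theorem Network.duallyAdaptivelyConsistent_backtrackFree {n : ℕ} {α : Type}
    (R : Network (Fin n) α)
    (cx : Fin n → Constraint (Fin n) α) (mx : Fin n → ℕ)
    (hcx : ∀ x, (R.DR x).Nonempty → cx x ∈ R.DR x)
    (hcx_tight : ∀ x, (R.DR x).Nonempty → R.ProperlyTightWrt (cx x) x (mx x))
    (hmx_min : ∀ x, (R.DR x).Nonempty → ∀ c ∈ R.DR x, ∀ m' : ℕ,
      R.ProperlyTightWrt c x m' → mx x ≤ m')
    (h1 : ∀ x : Fin n, (R.DR x).ncard ≤ mx x → R.ConsistentOnVar (R.DR x) x)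
    (h2 : ∀ x : Fin n, mx x < (R.DR x).ncard →
      ∀ Cs ⊆ R.DR x \ {cx x}, Cs.ncard = mx x →
        R.ConsistentOnVar (insert (cx x) Cs) x) :
    R.BacktrackFree :=
  Network.duallyAdaptivelyConsistent_backtrackFree_general R cx mx hcx hcx_tight h1 h2
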